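/- For all real h and k, the derivative with respect to h of Owen's T function T(h,k) equals -(1/(2√(2π))) · exp(-h²/2) · erf(k·h/√2). -/

import Mathlib

open Real MeasureTheory

noncomputable def erf (x : ℝ) : ℝ := 2 / Real.sqrt π * ∫ s in (0:ℝ)..x, Real.exp (-s^2)

noncomputable def owenT (h k : ℝ) : ℝ :=
  (1 / (2 * π)) * ∫ s in (0:ℝ)..k, (1 / (1 + s^2)) * Real.exp (-h^2 * (1 + s^2) / 2)

/-! Differentiating under the integral sign, the factor `1 / (1 + s²)` cancels and the
`h`-derivative of the integrand is `-h · exp(-h²/2) · exp(-h²s²/2)`, a Gaussian in `s`; the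
substitution `u = h s / √2` turns its integral over `[0, k]` into `erf (k h / √2)`. -/

lemma integral_exp_neg_mul_sq_eq_erf (c k : ℝ) :
    c * ∫ s in (0:ℝ)..k, Real.exp (-(c * s)^2) = Real.sqrt π / 2 * erf (c * k) := by
  have hsub := intervalIntegral.smul_integral_comp_mul_left (fun u => Real.exp (-u^2)) c
    (a := 0) (b := k)
  rw [smul_eq_mul, mul_zero] at hsub
  rw [hsub, erf, ← mul_assoc, show Real.sqrt π / 2 * (2 / Real.sqrt π) = 1 by field_simp,
    one_mul]

lemma hasDerivAt_owenT_integrand (s x : ℝ) :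
    HasDerivAt (fun x => 1 / (1 + s^2) * Real.exp (-x^2 * (1 + s^2) / 2))
      (-x * Real.exp (-x^2 * (1 + s^2) / 2)) x := by
  have hexponent : HasDerivAt (fun x => -x^2 * (1 + s^2) / 2) (-x * (1 + s^2)) x :=
    (((hasDerivAt_pow 2 x).neg.mul_const (1 + s^2)).div_const 2).congr_deriv (by ring)
  exact (hexponent.exp.const_mul (1 / (1 + s^2))).congr_deriv (by field_simp)

lemma abs_mul_exp_neg_sq_mul_one_add_sq_le (x s : ℝ) :
    |x * Real.exp (-x^2 * (1 + s^2) / 2)| ≤ |x| := by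
  rw [abs_mul, abs_of_pos (exp_pos _)]
  refine mul_le_of_le_one_right (abs_nonneg x) (exp_le_one_iff.mpr ?_)
  have : 0 ≤ x^2 * (1 + s^2) := by positivity
  linarith

lemma hasDerivAt_integral_owenT_integrand (a b h : ℝ) :
    HasDerivAt (fun x => ∫ s in a..b, 1 / (1 + s^2) * Real.exp (-x^2 * (1 + s^2) / 2))
      (∫ s in a..b, -h * Real.exp (-h^2 * (1 + s^2) / 2)) h := by
  have hcont : ∀ x, Continuous fun s : ℝ => 1 / (1 + s^2) * Real.exp (-x^2 * (1 + s^2) / 2) :=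
    fun x => .mul (continuous_const.div (by fun_prop) fun s => by positivity) (by fun_prop)
  have hcont' : Continuous fun s : ℝ => -h * Real.exp (-h^2 * (1 + s^2) / 2) := by fun_prop
  refine (intervalIntegral.hasDerivAt_integral_of_dominated_loc_of_deriv_le
    (bound := fun _ => |h| + 1) (Metric.ball_mem_nhds h one_pos)
    (.of_forall fun x => (hcont x).aestronglyMeasurable) ((hcont h).intervalIntegrable a b)
    hcont'.aestronglyMeasurable ?_ intervalIntegrable_const
    (.of_forall fun s _ x _ => hasDerivAt_owenT_integrand s x)).2
  refine .of_forall fun s _ x hx => ?_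
  have hxh : |x| ≤ |h| + 1 := by
    have := abs_sub_abs_le_abs_sub x h
    rw [Metric.mem_ball, dist_eq] at hx
    linarith
  rw [norm_eq_abs, neg_mul, abs_neg]
  exact (abs_mul_exp_neg_sq_mul_one_add_sq_le x s).trans hxh

lemma integral_neg_mul_exp_neg_sq_mul_eq_erf (h k : ℝ) :
    ∫ s in (0:ℝ)..k, -h * Real.exp (-h^2 * (1 + s^2) / 2)
      = -(Real.sqrt π / Real.sqrt 2) * Real.exp (-h^2 / 2) * erf (k * h / Real.sqrt 2) := by
  have hsplit : ∀ s : ℝ, -h * Real.exp (-h^2 * (1 + s^2) / 2)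
      = -(Real.sqrt 2 * Real.exp (-h^2 / 2)) *
          (h / Real.sqrt 2 * Real.exp (-(h / Real.sqrt 2 * s)^2)) := by
    intro s
    have hexp : -h^2 * (1 + s^2) / 2 = -h^2 / 2 + -(h / Real.sqrt 2 * s)^2 := by
      rw [mul_pow, div_pow, sq_sqrt zero_le_two]
      ring
    rw [hexp, exp_add]
    field_simp
  simp_rw [hsplit, intervalIntegral.integral_const_mul, integral_exp_neg_mul_sq_eq_erf]
  field_simp
  rw [sq_sqrt zero_le_two]

theorem owenT_deriv (h k : ℝ) :
    HasDerivAt (fun x => owenT x k)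
      (-(1 / (2 * Real.sqrt (2 * π))) * Real.exp (-h^2 / 2) * erf (k * h / Real.sqrt 2)) h := by
  have hT := (hasDerivAt_integral_owenT_integrand 0 k h).const_mul (1 / (2 * π))
  rw [integral_neg_mul_exp_neg_sq_mul_eq_erf] at hT
  refine hT.congr_deriv ?_
  have hπ : π = Real.sqrt π ^ 2 := (sq_sqrt pi_pos.le).symm
  rw [sqrt_mul zero_le_two]
  nth_rw 1 [hπ]
  field_simp
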